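/- Assume U : [0,α] → ℝ is continuous, convex, and continuously differentiable on (0,α) with derivative U′, that m¹ : [0,α] → [0,∞) is continuous, nondecreasing and satisfies m¹(0) = 0, and that m² : [0,α] → [0,∞) is continuous, nonincreasing and satisfies m²(α) = 0. Then for every ρⁿ ∈ 𝒜_{Δ,+} = (0,α)^N there exists exactly one ρ ∈ 𝒜_{Δ,+} such that H(ρ) = ρⁿ. -/

import Mathlib

/-!
Once `U'` is monotone (`U` is convex), the upwind flux `F_{k+1/2}` is nondecreasing in `ρ_k` and
nonincreasing in `ρ_{k+1}`, so `H_i` grows at least as fast as `ρ_i` and is nonincreasing in the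
other components. Summing `H(ρ) - H(σ)` over the cells where `σ < ρ`, the fluxes telescope to the
outflow through the boundary of that set, which is nonnegative; hence `H ρ ≤ H σ` forces `ρ ≤ σ`,
and the solution is unique.

For existence, `m¹(0) = 0` and `m²(α) = 0` make constant states close to `0` and to `α` a sub- and a
supersolution. Solving the `i`-th equation in the `i`-th unknown only (intermediate value theorem)
defines a monotone self-map of the order interval between them, whose Knaster–Tarski fixed point
solves `H(ρ) = ρⁿ`.
-/

open Set Finset

/-- Velocity v_{k+1/2} at the interface between cells k and k+1 (0-based). -/
noncomputable def vel (N : ℕ) (Δx : ℝ) (V : Fin N → ℝ) (U' : ℝ → ℝ)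
    (ρ : Fin N → ℝ) (k : ℕ) : ℝ :=
  if h : k + 1 < N then
    -(((U' (ρ ⟨k + 1, h⟩) + V ⟨k + 1, h⟩) -
        (U' (ρ ⟨k, Nat.lt_of_succ_lt h⟩) + V ⟨k, Nat.lt_of_succ_lt h⟩)) / Δx)
  else 0

/-- Upwind numerical flux F_{k+1/2} at the interface between cells k and k+1
(0-based), with the no-flux convention at the boundary. -/
noncomputable def numFlux (N : ℕ) (Δx : ℝ) (V : Fin N → ℝ) (m1 m2 U' : ℝ → ℝ)
    (ρ : Fin N → ℝ) (k : ℕ) : ℝ :=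
  if h : k + 1 < N then
    m1 (ρ ⟨k, Nat.lt_of_succ_lt h⟩) * m2 (ρ ⟨k + 1, h⟩) *
        max (vel N Δx V U' ρ k) 0 +
      m1 (ρ ⟨k + 1, h⟩) * m2 (ρ ⟨k, Nat.lt_of_succ_lt h⟩) *
        min (vel N Δx V U' ρ k) 0
  else 0

/-- One implicit Euler step map H_i(λ, ρ) = ρ_i + λ(Δt/Δx)(F_{i+1/2} − F_{i−1/2}). -/
noncomputable def Hmap (N : ℕ) (Δx Δt : ℝ) (V : Fin N → ℝ) (m1 m2 U' : ℝ → ℝ)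
    (lam : ℝ) (ρ : Fin N → ℝ) (i : Fin N) : ℝ :=
  ρ i + lam * (Δt / Δx) *
    (numFlux N Δx V m1 m2 U' ρ i -
      if (i : ℕ) = 0 then 0 else numFlux N Δx V m1 m2 U' ρ ((i : ℕ) - 1))

open Filter Topology Function

lemma sum_range_succ_mul_sub_prev (n : ℕ) (g χ : ℕ → ℝ) (hg : g n = 0) :
    ∑ k ∈ range (n + 1), χ k * (g k - if k = 0 then 0 else g (k - 1)) =
      ∑ k ∈ range n, (χ k - χ (k + 1)) * g k := by
  simp only [mul_sub]
  rw [sum_sub_distrib, sum_range_succ, hg, mul_zero, add_zero, sum_range_succ']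
  simp only [if_pos, mul_zero, add_zero, Nat.add_sub_cancel]
  rw [← sum_sub_distrib]
  exact sum_congr rfl fun k _ => by rw [if_neg (by omega : ¬(k + 1 = 0))]; ring

lemma sum_filter_sub_prev_nonneg (n : ℕ) (p : ℕ → Prop) [DecidablePred p] (g : ℕ → ℝ)
    (hg : g (n - 1) = 0) (hout : ∀ k, k + 1 < n → p k → ¬ p (k + 1) → 0 ≤ g k)
    (hin : ∀ k, k + 1 < n → ¬ p k → p (k + 1) → g k ≤ 0) :
    0 ≤ ∑ k ∈ range n with p k, (g k - if k = 0 then 0 else g (k - 1)) := by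
  obtain _ | n := n
  · simp
  rw [sum_filter]
  have hparts := sum_range_succ_mul_sub_prev n g (fun k => if p k then 1 else 0) hg
  simp only [boole_mul] at hparts
  rw [hparts]
  refine sum_nonneg fun k hk => ?_
  have hk : k + 1 < n + 1 := by simpa using hk
  by_cases hp : p k <;> by_cases hq : p (k + 1) <;> simp only [hp, hq, if_true, if_false]
  · simp
  · simpa using hout k hk hp hq
  · simpa using hin k hk hp hq
  · simp

lemma exists_lt_lt_of_continuousOn {ι : Type*} [Finite ι] {f : ι → ℝ → ℝ} {a b : ℝ}
    {y : ι → ℝ} (hab : a < b) (hf : ∀ i, ContinuousOn (f i) (Icc a b))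
    (ha : ∀ i, f i a < y i) (hb : ∀ i, y i < f i b) :
    ∃ δ β, a < δ ∧ δ < β ∧ β < b ∧ ∀ i, f i δ < y i ∧ y i < f i β := by
  obtain ⟨δ, hδ, hδy⟩ : ∃ δ ∈ Ioo a b, ∀ i, f i δ < y i := by
    refine (Filter.Eventually.and (Ioo_mem_nhdsGT hab) (eventually_all.2 fun i => ?_)).exists
    exact (((hf i) a (Set.left_mem_Icc.2 hab.le)).mono_of_mem_nhdsWithin
      (Icc_mem_nhdsGT hab)).eventually_lt_const (ha i)
  obtain ⟨β, hβ, hβy⟩ : ∃ β ∈ Ioo δ b, ∀ i, y i < f i β := by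
    refine (Filter.Eventually.and (Ioo_mem_nhdsLT hδ.2) (eventually_all.2 fun i => ?_)).exists
    exact (((hf i) b (Set.right_mem_Icc.2 hab.le)).mono_of_mem_nhdsWithin
      (Icc_mem_nhdsLT hab)).eventually_const_lt (hb i)
  exact ⟨δ, β, hδ.1, hβ.1, hβ.2, fun i => ⟨hδy i, hβy i⟩⟩

lemma mul_max_add_mul_min_le {A A' B B' v v' : ℝ} (hA : 0 ≤ A) (hAA' : A ≤ A') (hB' : 0 ≤ B')
    (hBB' : B' ≤ B) (hv : v ≤ v') :
    A * max v 0 + B * min v 0 ≤ A' * max v' 0 + B' * min v' 0 := by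
  gcongr ?_ + ?_
  · exact mul_le_mul hAA' (max_le_max hv le_rfl) (le_max_right _ _) (hA.trans hAA')
  · calc B * min v 0 ≤ B' * min v 0 := mul_le_mul_of_nonpos_right hBB' (min_le_right _ _)
      _ ≤ B' * min v' 0 := by gcongr

def HasComparisonOn {ι : Type*} [DecidableEq ι] (H : (ι → ℝ) → ι → ℝ) (s : Set ℝ) : Prop :=
  ∀ u w : ι → ℝ, (∀ j, u j ∈ s) → (∀ j, w j ∈ s) → ∀ i, u i ≤ w i → (∀ j ≠ i, w j ≤ u j) →
    w i - u i ≤ H w i - H u i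

namespace HasComparisonOn

variable {ι : Type*} [DecidableEq ι] {H : (ι → ℝ) → ι → ℝ} {δ β : ℝ} {y : ι → ℝ}

theorem mono {s t : Set ℝ} (hH : HasComparisonOn H t) (hst : s ⊆ t) : HasComparisonOn H s :=
  fun u w hu hw => hH u w (fun j => hst (hu j)) (fun j => hst (hw j))

theorem exists_update_eq (hH : HasComparisonOn H (Icc δ β)) (hδβ : δ ≤ β)
    (hδ : ∀ i, H (fun _ => δ) i ≤ y i) (hβ : ∀ i, y i ≤ H (fun _ => β) i)
    {ρ : ι → ℝ} (hρ : ∀ j, ρ j ∈ Icc δ β) {i : ι}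
    (hcont : ContinuousOn (fun t => H (update ρ i t) i) (Icc δ β)) :
    ∃ t ∈ Icc δ β, H (update ρ i t) i = y i := by
  have hupd : ∀ t ∈ Icc δ β, ∀ j, update ρ i t j ∈ Icc δ β := fun t ht =>
    (forall_update_iff ρ fun _ x => x ∈ Icc δ β).2 ⟨ht, fun j _ => hρ j⟩
  refine intermediate_value_Icc hδβ hcont ⟨?_, ?_⟩
  · have := hH _ (fun _ => δ) (hupd δ (Set.left_mem_Icc.2 hδβ)) (fun _ => ⟨le_rfl, hδβ⟩) i
      (by simp) (fun j hj => by simpa [hj] using (hρ j).1)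
    simp only [update_self, sub_self] at this
    linarith [hδ i]
  · have := hH (fun _ => β) _ (fun _ => ⟨hδβ, le_rfl⟩) (hupd β (Set.right_mem_Icc.2 hδβ)) i
      (by simp) (fun j hj => by simpa [hj] using (hρ j).2)
    simp only [update_self, sub_self] at this
    linarith [hβ i]

theorem exists_eq (hH : HasComparisonOn H (Icc δ β)) (hδβ : δ ≤ β)
    (hcont : ∀ ρ : ι → ℝ, (∀ j, ρ j ∈ Icc δ β) → ∀ i,
      ContinuousOn (fun t => H (update ρ i t) i) (Icc δ β))
    (hδ : ∀ i, H (fun _ => δ) i ≤ y i) (hβ : ∀ i, y i ≤ H (fun _ => β) i) :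
    ∃ ρ : ι → ℝ, (∀ i, ρ i ∈ Icc δ β) ∧ H ρ = y := by
  have : Fact (δ ≤ β) := ⟨hδβ⟩
  choose T hT hTy using fun (ρ : ι → Icc δ β) i =>
    hH.exists_update_eq hδβ hδ hβ (fun j => (ρ j).2) (hcont _ (fun j => (ρ j).2) i)
  have hupd : ∀ (ρ : ι → Icc δ β) i, ∀ j, update (fun j => (ρ j : ℝ)) i (T ρ i) j ∈ Icc δ β :=
    fun ρ i => (forall_update_iff _ fun _ x => x ∈ Icc δ β).2 ⟨hT ρ i, fun j _ => (ρ j).2⟩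
  let J : (ι → Icc δ β) →o (ι → Icc δ β) :=
    { toFun := fun ρ i => ⟨T ρ i, hT ρ i⟩
      monotone' := fun ρ σ hρσ i => by
        by_contra! hlt
        have := hH _ _ (hupd σ i) (hupd ρ i) i (by simpa using hlt.le)
          (fun j hj => by simpa [hj] using hρσ j)
        simp only [update_self, hTy] at this
        exact absurd hlt (not_lt.2 (by simpa using this)) }
  refine ⟨fun j => J.lfp j, fun j => (J.lfp j).2, funext fun i => ?_⟩
  have hfix : T J.lfp i = J.lfp i := congrArg Subtype.val (congrFun J.map_lfp i)
  simpa [hfix] using hTy J.lfp i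

end HasComparisonOn

section Scheme

variable {N : ℕ} {Δx Δt : ℝ} {V : Fin N → ℝ} {m1 m2 U' : ℝ → ℝ} {s : Set ℝ}

lemma numFlux_of_not_lt (ρ : Fin N → ℝ) {k : ℕ} (hk : ¬ k + 1 < N) :
    numFlux N Δx V m1 m2 U' ρ k = 0 := by
  simp [numFlux, hk]

lemma numFlux_le_numFlux (hΔx : 0 ≤ Δx) (hU' : MonotoneOn U' s) (hm1 : MonotoneOn m1 s)
    (hm2 : AntitoneOn m2 s) (hm1_nonneg : ∀ x ∈ s, 0 ≤ m1 x) (hm2_nonneg : ∀ x ∈ s, 0 ≤ m2 x)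
    {u w : Fin N → ℝ} (hu : ∀ j, u j ∈ s) (hw : ∀ j, w j ∈ s) {k : ℕ}
    (huw : ∀ hk : k + 1 < N, u ⟨k, by omega⟩ ≤ w ⟨k, by omega⟩ ∧ w ⟨k + 1, hk⟩ ≤ u ⟨k + 1, hk⟩) :
    numFlux N Δx V m1 m2 U' u k ≤ numFlux N Δx V m1 m2 U' w k := by
  by_cases hk : k + 1 < N
  swap
  · simp [numFlux, hk]
  obtain ⟨h₀, h₁⟩ := huw hk
  simp only [numFlux, vel, dif_pos hk]
  refine mul_max_add_mul_min_le (mul_nonneg (hm1_nonneg _ (hu _)) (hm2_nonneg _ (hu _))) ?_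
    (mul_nonneg (hm1_nonneg _ (hw _)) (hm2_nonneg _ (hw _))) ?_ ?_
  · exact mul_le_mul (hm1 (hu _) (hw _) h₀) (hm2 (hw _) (hu _) h₁) (hm2_nonneg _ (hu _))
      (hm1_nonneg _ (hw _))
  · exact mul_le_mul (hm1 (hw _) (hu _) h₁) (hm2 (hu _) (hw _) h₀) (hm2_nonneg _ (hw _))
      (hm1_nonneg _ (hu _))
  · have := hU' (hu _) (hw _) h₀
    have := hU' (hw _) (hu _) h₁
    exact neg_le_neg (div_le_div_of_nonneg_right (by linarith) hΔx)

lemma numFlux_const (x : ℝ) (k : ℕ) :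
    numFlux N Δx V m1 m2 U' (fun _ => x) k = m1 x * m2 x * vel N Δx V U' (fun _ => x) k := by
  unfold numFlux
  split_ifs with hk
  · rw [← mul_add, max_add_min, add_zero]
  · simp [vel, hk]

lemma vel_const (x y : ℝ) (k : ℕ) :
    vel N Δx V U' (fun _ => x) k = vel N Δx V U' (fun _ => y) k := by
  unfold vel
  split_ifs <;> ring

lemma continuousAt_numFlux (hs : IsOpen s) (hm1 : ContinuousOn m1 s) (hm2 : ContinuousOn m2 s)
    (hU' : ContinuousOn U' s) {ρ : Fin N → ℝ} (hρ : ∀ j, ρ j ∈ s) (k : ℕ) :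
    ContinuousAt (fun σ => numFlux N Δx V m1 m2 U' σ k) ρ := by
  have hcomp : ∀ f : ℝ → ℝ, ContinuousOn f s → ∀ j,
      ContinuousAt (fun σ : Fin N → ℝ => f (σ j)) ρ := fun f hf j =>
    ContinuousAt.comp (g := f) (hf.continuousAt (hs.mem_nhds (hρ j)))
      (continuous_apply j).continuousAt
  by_cases hk : k + 1 < N
  · simp only [numFlux, vel, dif_pos hk]
    have hv : ContinuousAt (fun σ : Fin N → ℝ =>
        -((U' (σ ⟨k + 1, hk⟩) + V ⟨k + 1, hk⟩ - (U' (σ ⟨k, by omega⟩) + V ⟨k, by omega⟩)) / Δx)) ρ :=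
      ((((hcomp U' hU' _).add continuousAt_const).sub
        ((hcomp U' hU' _).add continuousAt_const)).div_const Δx).neg
    exact (((hcomp m1 hm1 _).mul (hcomp m2 hm2 _)).mul (hv.max continuousAt_const)).add
      (((hcomp m1 hm1 _).mul (hcomp m2 hm2 _)).mul (hv.min continuousAt_const))
  · simp only [numFlux, dif_neg hk]
    exact continuousAt_const

theorem hasComparisonOn_Hmap (hΔx : 0 ≤ Δx) (hΔt : 0 ≤ Δt) (hU' : MonotoneOn U' s)
    (hm1 : MonotoneOn m1 s) (hm2 : AntitoneOn m2 s) (hm1_nonneg : ∀ x ∈ s, 0 ≤ m1 x)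
    (hm2_nonneg : ∀ x ∈ s, 0 ≤ m2 x) :
    HasComparisonOn (Hmap N Δx Δt V m1 m2 U' 1) s := by
  intro u w hu hw i hi hj
  have hright : numFlux N Δx V m1 m2 U' u i ≤ numFlux N Δx V m1 m2 U' w i :=
    numFlux_le_numFlux hΔx hU' hm1 hm2 hm1_nonneg hm2_nonneg hu hw fun _ =>
      ⟨hi, hj _ (by simp [Fin.ext_iff])⟩
  have hleft : (if (i : ℕ) = 0 then 0 else numFlux N Δx V m1 m2 U' w (i - 1)) ≤
      (if (i : ℕ) = 0 then 0 else numFlux N Δx V m1 m2 U' u (i - 1)) := by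
    split_ifs with hi0
    · rfl
    refine numFlux_le_numFlux hΔx hU' hm1 hm2 hm1_nonneg hm2_nonneg hw hu fun hk => ?_
    have hi' : (⟨i - 1 + 1, hk⟩ : Fin N) = i := Fin.ext (by simp; omega)
    exact ⟨hj _ (by simp [Fin.ext_iff]; omega), by rwa [hi']⟩
  have := mul_le_mul_of_nonneg_left (sub_le_sub hright hleft) (div_nonneg hΔt hΔx)
  simp only [Hmap, one_mul]
  linarith

lemma exists_Hmap_const :
    ∃ c : Fin N → ℝ, ∀ x i, Hmap N Δx Δt V m1 m2 U' 1 (fun _ => x) i = x + m1 x * m2 x * c i := by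
  refine ⟨fun i => Δt / Δx * (vel N Δx V U' (fun _ => 0) i -
    if (i : ℕ) = 0 then 0 else vel N Δx V U' (fun _ => 0) (i - 1)), fun x i => ?_⟩
  simp only [Hmap, numFlux_const, vel_const x 0]
  split_ifs <;> ring

lemma continuousOn_Hmap_update (hs : IsOpen s) (hm1 : ContinuousOn m1 s)
    (hm2 : ContinuousOn m2 s) (hU' : ContinuousOn U' s) {ρ : Fin N → ℝ} (hρ : ∀ j, ρ j ∈ s)
    (i : Fin N) : ContinuousOn (fun t => Hmap N Δx Δt V m1 m2 U' 1 (update ρ i t) i) s := by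
  intro t ht
  have hupd : ∀ j, update ρ i t j ∈ s := (forall_update_iff ρ fun _ x => x ∈ s).2
    ⟨ht, fun j _ => hρ j⟩
  have hright := continuousAt_numFlux (Δx := Δx) (V := V) hs hm1 hm2 hU' hupd i
  have hleft := continuousAt_numFlux (Δx := Δx) (V := V) hs hm1 hm2 hU' hupd (i - 1)
  have hH : ContinuousAt (fun σ => Hmap N Δx Δt V m1 m2 U' 1 σ i) (update ρ i t) := by
    have hcoord := (continuous_apply i).continuousAt (x := update ρ i t)
    unfold Hmap
    split_ifs
    · exact hcoord.add ((hright.sub continuousAt_const).const_mul _)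
    · exact hcoord.add ((hright.sub hleft).const_mul _)
  exact (hH.comp (continuous_const.update i continuous_id).continuousAt).continuousWithinAt

theorem le_of_Hmap_le (hΔx : 0 ≤ Δx) (hΔt : 0 ≤ Δt) (hU' : MonotoneOn U' s)
    (hm1 : MonotoneOn m1 s) (hm2 : AntitoneOn m2 s) (hm1_nonneg : ∀ x ∈ s, 0 ≤ m1 x)
    (hm2_nonneg : ∀ x ∈ s, 0 ≤ m2 x) {ρ σ : Fin N → ℝ} (hρ : ∀ j, ρ j ∈ s) (hσ : ∀ j, σ j ∈ s)
    (hH : ∀ i, Hmap N Δx Δt V m1 m2 U' 1 ρ i ≤ Hmap N Δx Δt V m1 m2 U' 1 σ i) : ρ ≤ σ := by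
  by_contra hρσ
  obtain ⟨i₀, hi₀⟩ : ∃ i, σ i < ρ i := by simpa [Pi.le_def] using hρσ
  set S := univ.filter fun i => σ i < ρ i
  set g : ℕ → ℝ := fun k => numFlux N Δx V m1 m2 U' ρ k - numFlux N Δx V m1 m2 U' σ k
  have hflux : 0 ≤ ∑ i ∈ S, (g i - if (i : ℕ) = 0 then 0 else g (i - 1)) := by
    let p : ℕ → Prop := fun k => ∃ h : k < N, σ ⟨k, h⟩ < ρ ⟨k, h⟩
    have hS : ∑ i ∈ S, (g i - if (i : ℕ) = 0 then 0 else g (i - 1)) =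
        ∑ k ∈ range N with p k, (g k - if k = 0 then 0 else g (k - 1)) := by
      rw [sum_filter, sum_filter, ← Fin.sum_univ_eq_sum_range
        (fun k => if p k then g k - (if k = 0 then 0 else g (k - 1)) else 0)]
      simp [p]
    rw [hS]
    refine sum_filter_sub_prev_nonneg N p g ?_ ?_ ?_
    · simp only [g]
      rw [numFlux_of_not_lt ρ (by omega), numFlux_of_not_lt σ (by omega), sub_self]
    · intro k hk hpk hnot
      obtain ⟨_, hlt⟩ := hpk
      refine sub_nonneg.2 (numFlux_le_numFlux hΔx hU' hm1 hm2 hm1_nonneg hm2_nonneg hσ hρ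
        fun hk' => ⟨hlt.le, ?_⟩)
      simpa [p, hk'] using hnot
    · intro k hk hnot hpk
      obtain ⟨_, hlt⟩ := hpk
      refine sub_nonpos.2 (numFlux_le_numFlux hΔx hU' hm1 hm2 hm1_nonneg hm2_nonneg hρ hσ
        fun hk' => ⟨?_, hlt.le⟩)
      simpa [p, show k < N by omega] using hnot
  have hmass : 0 < ∑ i ∈ S, (ρ i - σ i) :=
    sum_pos (fun i hi => sub_pos.2 (mem_filter.1 hi).2) ⟨i₀, mem_filter.2 ⟨mem_univ _, hi₀⟩⟩
  have hbalance : ∑ i ∈ S, (Hmap N Δx Δt V m1 m2 U' 1 ρ i - Hmap N Δx Δt V m1 m2 U' 1 σ i) =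
      ∑ i ∈ S, (ρ i - σ i) + Δt / Δx * ∑ i ∈ S, (g i - if (i : ℕ) = 0 then 0 else g (i - 1)) := by
    rw [mul_sum, ← sum_add_distrib]
    refine sum_congr rfl fun i _ => ?_
    simp only [Hmap, g]
    split_ifs <;> ring
  have hH' : ∑ i ∈ S, (Hmap N Δx Δt V m1 m2 U' 1 ρ i - Hmap N Δx Δt V m1 m2 U' 1 σ i) ≤ 0 :=
    sum_nonpos fun i _ => sub_nonpos.2 (hH i)
  nlinarith [mul_nonneg (div_nonneg hΔt hΔx) hflux]

end Scheme

theorem scheme_well_posedness_open_general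
    (N : ℕ) (Δx Δt : ℝ) (hΔx : Δx = 1 / N) (hΔt : 0 < Δt)
    (α : ℝ) (hα : 0 < α) (V : Fin N → ℝ)
    (U U' : ℝ → ℝ)
    (hU_conv : ConvexOn ℝ (Icc 0 α) U)
    (hU_deriv : ∀ s ∈ Ioo 0 α, HasDerivAt U (U' s) s)
    (hU'_cont : ContinuousOn U' (Ioo 0 α))
    (m1 m2 : ℝ → ℝ)
    (hm1_cont : ContinuousOn m1 (Icc 0 α)) (hm1_mono : MonotoneOn m1 (Icc 0 α))
    (hm1_nonneg : ∀ s ∈ Icc 0 α, 0 ≤ m1 s) (hm10 : m1 0 = 0)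
    (hm2_cont : ContinuousOn m2 (Icc 0 α)) (hm2_anti : AntitoneOn m2 (Icc 0 α))
    (hm2_nonneg : ∀ s ∈ Icc 0 α, 0 ≤ m2 s) (hm2α : m2 α = 0)
    (ρn : Fin N → ℝ) (hρn : ∀ i, ρn i ∈ Ioo 0 α) :
    ∃! ρ : Fin N → ℝ, (∀ i, ρ i ∈ Ioo 0 α) ∧ Hmap N Δx Δt V m1 m2 U' 1 ρ = ρn := by
  have hΔx₀ : 0 ≤ Δx := hΔx ▸ by positivity
  have hsub : Ioo 0 α ⊆ Icc 0 α := Ioo_subset_Icc_self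
  have hU'_mono : MonotoneOn U' (Ioo 0 α) :=
    ((hU_conv.subset hsub (convex_Ioo 0 α)).monotoneOn_deriv
      fun x hx => (hU_deriv x hx).differentiableAt).congr fun x hx => (hU_deriv x hx).deriv
  have hm1_nonneg' : ∀ x ∈ Ioo 0 α, 0 ≤ m1 x := fun x hx => hm1_nonneg x (hsub hx)
  have hm2_nonneg' : ∀ x ∈ Ioo 0 α, 0 ≤ m2 x := fun x hx => hm2_nonneg x (hsub hx)
  obtain ⟨c, hc⟩ : ∃ c : Fin N → ℝ, ∀ x i,
      Hmap N Δx Δt V m1 m2 U' 1 (fun _ => x) i = x + m1 x * m2 x * c i := exists_Hmap_const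
  obtain ⟨δ, β, hδ, hδβ, hβ, hδβρn⟩ := exists_lt_lt_of_continuousOn (y := ρn)
    (f := fun i x => x + m1 x * m2 x * c i) hα
    (fun i => continuousOn_id.add ((hm1_cont.mul hm2_cont).mul continuousOn_const))
    (fun i => by simpa [hm10] using (hρn i).1) (fun i => by simpa [hm2α] using (hρn i).2)
  have hbox : Icc δ β ⊆ Ioo 0 α := Icc_subset_Ioo hδ hβ
  have hcomp : HasComparisonOn (Hmap N Δx Δt V m1 m2 U' 1) (Ioo 0 α) :=
    hasComparisonOn_Hmap hΔx₀ hΔt.le hU'_mono (hm1_mono.mono hsub) (hm2_anti.mono hsub)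
      hm1_nonneg' hm2_nonneg'
  have hle : ∀ ρ σ : Fin N → ℝ, (∀ i, ρ i ∈ Ioo 0 α) → (∀ i, σ i ∈ Ioo 0 α) →
      Hmap N Δx Δt V m1 m2 U' 1 ρ = Hmap N Δx Δt V m1 m2 U' 1 σ → ρ ≤ σ := fun ρ σ hρ hσ hH =>
    le_of_Hmap_le hΔx₀ hΔt.le hU'_mono (hm1_mono.mono hsub) (hm2_anti.mono hsub)
      hm1_nonneg' hm2_nonneg' hρ hσ fun i => (congrFun hH i).le
  obtain ⟨ρ, hρ, hHρ⟩ := (hcomp.mono hbox).exists_eq hδβ.le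
    (fun ρ hρ i => (continuousOn_Hmap_update isOpen_Ioo (hm1_cont.mono hsub)
      (hm2_cont.mono hsub) hU'_cont (fun j => hbox (hρ j)) i).mono hbox)
    (fun i => (hc δ i).trans_le (hδβρn i).1.le) (fun i => (hδβρn i).2.le.trans_eq (hc β i).symm)
  refine ⟨ρ, ⟨fun i => hbox (hρ i), hHρ⟩, fun σ ⟨hσ, hHσ⟩ => le_antisymm ?_ ?_⟩
  · exact hle σ ρ hσ (fun i => hbox (hρ i)) (hHσ.trans hHρ.symm)
  · exact hle ρ σ (fun i => hbox (hρ i)) hσ (hHρ.trans hHσ.symm)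

/-- Well-posedness of one step of the implicit finite-volume scheme on
𝒜_{Δ,+} = (0,α)^N for U continuous on [0,α] and C¹ on (0,α). -/
theorem scheme_well_posedness_open
    (N : ℕ) (hN : 2 ≤ N) (Δx Δt : ℝ) (hΔx : Δx = 1 / N) (hΔt : 0 < Δt)
    (α : ℝ) (hα : 0 < α) (V : Fin N → ℝ)
    (U U' : ℝ → ℝ) (hU_cont : ContinuousOn U (Icc 0 α))
    (hU_conv : ConvexOn ℝ (Icc 0 α) U)
    (hU_deriv : ∀ s ∈ Ioo 0 α, HasDerivAt U (U' s) s)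
    (hU'_cont : ContinuousOn U' (Ioo 0 α))
    (m1 m2 : ℝ → ℝ)
    (hm1_cont : ContinuousOn m1 (Icc 0 α)) (hm1_mono : MonotoneOn m1 (Icc 0 α))
    (hm1_nonneg : ∀ s ∈ Icc 0 α, 0 ≤ m1 s) (hm10 : m1 0 = 0)
    (hm2_cont : ContinuousOn m2 (Icc 0 α)) (hm2_anti : AntitoneOn m2 (Icc 0 α))
    (hm2_nonneg : ∀ s ∈ Icc 0 α, 0 ≤ m2 s) (hm2α : m2 α = 0)
    (ρn : Fin N → ℝ) (hρn : ∀ i, ρn i ∈ Ioo 0 α) :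
    ∃! ρ : Fin N → ℝ, (∀ i, ρ i ∈ Ioo 0 α) ∧ Hmap N Δx Δt V m1 m2 U' 1 ρ = ρn :=
  scheme_well_posedness_open_general N Δx Δt hΔx hΔt α hα V U U' hU_conv hU_deriv hU'_cont m1 m2
    hm1_cont hm1_mono hm1_nonneg hm10 hm2_cont hm2_anti hm2_nonneg hm2α ρn hρn
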